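/- arXiv:2003.09554 — 6 statements merged into one kernel-verified Lean document; each statement's English description precedes it below -/
import Mathlib

section
/- Let f : Fin m → [0,1] and let π be a permutation of Fin m. Define M : Fin m → ℝ by processing points in the order π(1), π(2), ..., π(m) and setting M(π(i)) = median{f(π(i)), L_i, H_i}, where H_i is the value M(π(j)) at the smallest point π(j) > π(i) among indices j < i (or +∞ if none exists), and L_i is the value M(π(j)) at the largest point π(j) < π(i) among indices j < i (or -∞ if none exists). Then M is monotone: for all x ≤ y in Fin m, M(x) ≤ M(y). -/
open Finset

/-- One step of the greedy monotonization: assign a value at point `p`,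
clamping `f p` between the previously assigned value at the largest assigned
point below `p` (`L`, or `-∞` if none) and the previously assigned value at the
smallest assigned point above `p` (`H`, or `+∞` if none); i.e. the median of
`{f p, L, H}`. -/
noncomputable def greedyStep {m : ℕ} (f : Fin m → ℝ) (s : Fin m → Option ℝ) (p : Fin m) :
    Fin m → Option ℝ :=
  let B := Finset.univ.filter (fun y => y < p ∧ (s y).isSome)
  let A := Finset.univ.filter (fun y => p < y ∧ (s y).isSome)
  let L : Option ℝ := if h : B.Nonempty then s (B.max' h) else none
  let H : Option ℝ := if h : A.Nonempty then s (A.min' h) else none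
  let v1 : ℝ :=
    match H with
    | some hv => min (f p) hv
    | none => f p
  let v2 : ℝ :=
    match L with
    | some lv => max v1 lv
    | none => v1
  fun y => if y = p then some v2 else s y

/-- State of the greedy monotonization after processing the first `n` points
`π 0, π 1, …, π (n-1)` of the permutation `π`. -/
noncomputable def greedyState {m : ℕ} (f : Fin m → ℝ) (π : Equiv.Perm (Fin m)) :
    ℕ → Fin m → Option ℝ
  | 0 => fun _ => none
  | n + 1 =>
    if h : n < m then greedyStep f (greedyState f π n) (π ⟨n, h⟩)
    else greedyState f π n

/-- The greedy monotonization `M^π_f` of `f` along the permutation `π`. -/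
noncomputable def greedyMono {m : ℕ} (f : Fin m → ℝ) (π : Equiv.Perm (Fin m)) (x : Fin m) : ℝ :=
  (greedyState f π m x).getD 0

/-!
Each intermediate state, read as a partial function, is monotone on its domain. The new value is
clamped between the values at the nearest assigned points below and above, and by monotonicity
these two values bound every assigned value below, resp. above, the new point, so monotonicity
survives each step. After all `m` steps every point is assigned.
-/

section PartialMonotone

variable {ι α : Type*} [Preorder ι] [Preorder α]

def PartialMonotone (s : ι → Option α) : Prop :=
  ∀ ⦃x y : ι⦄, x < y → ∀ a ∈ s x, ∀ b ∈ s y, a ≤ b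

theorem PartialMonotone.le_of_le {ι : Type*} [PartialOrder ι] {s : ι → Option α}
    (hs : PartialMonotone s) {x y : ι} (hxy : x ≤ y) {a b : α} (ha : a ∈ s x)
    (hb : b ∈ s y) : a ≤ b := by
  rcases hxy.lt_or_eq with hlt | rfl
  · exact hs hlt a ha b hb
  · exact (Option.mem_unique ha hb).le

theorem PartialMonotone.update [DecidableEq ι] {s : ι → Option α} (hs : PartialMonotone s)
    {p : ι} {v : α} (hlo : ∀ x < p, ∀ a ∈ s x, a ≤ v)
    (hhi : ∀ y, p < y → ∀ b ∈ s y, v ≤ b) :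
    PartialMonotone (Function.update s p (some v)) := by
  intro x y hxy a ha b hb
  rw [Function.update_apply] at ha hb
  split_ifs at ha hb with hx hy hy
  · exact absurd (hx ▸ hy ▸ hxy) (lt_irrefl _)
  · obtain rfl := Option.some_injective _ ha
    exact hhi y (hx ▸ hxy) b hb
  · obtain rfl := Option.some_injective _ hb
    exact hlo x (hy ▸ hxy) a ha
  · exact hs hxy a ha b hb

end PartialMonotone

section Clamp

variable {α : Type*} [LinearOrder α]

def clampOption (x : α) (L H : Option α) : α :=
  L.elim (H.elim x (min x)) (max (H.elim x (min x)))

theorem le_clampOption {x lv : α} {L : Option α} (H : Option α) (hL : lv ∈ L) :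
    lv ≤ clampOption x L H := by
  rw [Option.mem_def.mp hL]
  exact le_max_right _ _

theorem clampOption_le {x hv : α} {L H : Option α} (hH : hv ∈ H)
    (hLH : ∀ lv ∈ L, lv ≤ hv) :
    clampOption x L H ≤ hv := by
  rw [Option.mem_def.mp hH]
  cases L with
  | none => exact min_le_right _ _
  | some lv => exact max_le (min_le_right _ _) (hLH lv rfl)

end Clamp

section Neighbors

variable {ι α : Type*} [Fintype ι] [LinearOrder ι]

def lowerNeighbor (s : ι → Option α) (p : ι) : Option α :=
  if h : (Finset.univ.filter fun y => y < p ∧ (s y).isSome).Nonempty then s (Finset.max' _ h)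
  else none

def upperNeighbor (s : ι → Option α) (p : ι) : Option α :=
  if h : (Finset.univ.filter fun y => p < y ∧ (s y).isSome).Nonempty then s (Finset.min' _ h)
  else none

theorem exists_lt_of_mem_lowerNeighbor {s : ι → Option α} {p : ι} {lv : α}
    (h : lv ∈ lowerNeighbor s p) : ∃ x < p, lv ∈ s x := by
  unfold lowerNeighbor at h
  split_ifs at h with hne
  · exact ⟨_, (mem_filter.mp (max'_mem _ hne)).2.1, h⟩
  · simp at h

theorem exists_gt_of_mem_upperNeighbor {s : ι → Option α} {p : ι} {hv : α}
    (h : hv ∈ upperNeighbor s p) : ∃ y, p < y ∧ hv ∈ s y := by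
  unfold upperNeighbor at h
  split_ifs at h with hne
  · exact ⟨_, (mem_filter.mp (min'_mem _ hne)).2.1, h⟩
  · simp at h

variable [Preorder α]

theorem PartialMonotone.exists_mem_lowerNeighbor_ge {s : ι → Option α} (hs : PartialMonotone s)
    {p x : ι} (hx : x < p) {a : α} (ha : a ∈ s x) : ∃ lv ∈ lowerNeighbor s p, a ≤ lv := by
  have hxB : x ∈ Finset.univ.filter fun y => y < p ∧ (s y).isSome := by
    simp [hx, Option.isSome_iff_exists.mpr ⟨a, ha⟩]
  have hne : (Finset.univ.filter fun y => y < p ∧ (s y).isSome).Nonempty := ⟨x, hxB⟩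
  obtain ⟨lv, hlv⟩ := Option.isSome_iff_exists.mp (mem_filter.mp (max'_mem _ hne)).2.2
  refine ⟨lv, ?_, hs.le_of_le (le_max' _ x hxB) ha hlv⟩
  rw [lowerNeighbor, dif_pos hne]
  exact hlv

theorem PartialMonotone.exists_mem_upperNeighbor_le {s : ι → Option α} (hs : PartialMonotone s)
    {p y : ι} (hy : p < y) {b : α} (hb : b ∈ s y) : ∃ hv ∈ upperNeighbor s p, hv ≤ b := by
  have hyA : y ∈ Finset.univ.filter fun z => p < z ∧ (s z).isSome := by
    simp [hy, Option.isSome_iff_exists.mpr ⟨b, hb⟩]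
  have hne : (Finset.univ.filter fun z => p < z ∧ (s z).isSome).Nonempty := ⟨y, hyA⟩
  obtain ⟨hv, hhv⟩ := Option.isSome_iff_exists.mp (mem_filter.mp (min'_mem _ hne)).2.2
  refine ⟨hv, ?_, hs.le_of_le (min'_le _ y hyA) hhv hb⟩
  rw [upperNeighbor, dif_pos hne]
  exact hhv

theorem PartialMonotone.le_of_mem_lowerNeighbor_of_mem_upperNeighbor {s : ι → Option α}
    (hs : PartialMonotone s) {p : ι} {lv hv : α} (hl : lv ∈ lowerNeighbor s p)
    (hh : hv ∈ upperNeighbor s p) : lv ≤ hv := by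
  obtain ⟨x, hx, hlx⟩ := exists_lt_of_mem_lowerNeighbor hl
  obtain ⟨y, hy, hhy⟩ := exists_gt_of_mem_upperNeighbor hh
  exact hs (hx.trans hy) lv hlx hv hhy

end Neighbors

theorem greedyStep_eq_update {m : ℕ} (f : Fin m → ℝ) (s : Fin m → Option ℝ) (p : Fin m) :
    greedyStep f s p =
      Function.update s p (some (clampOption (f p) (lowerNeighbor s p) (upperNeighbor s p))) := by
  funext y
  rw [Function.update_apply]
  simp only [greedyStep]
  congr 2
  unfold clampOption lowerNeighbor upperNeighbor
  split <;> split <;> simp only [*, Option.elim]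

theorem PartialMonotone.greedyStep {m : ℕ} {s : Fin m → Option ℝ} (hs : PartialMonotone s)
    (f : Fin m → ℝ) (p : Fin m) : PartialMonotone (greedyStep f s p) := by
  rw [greedyStep_eq_update]
  refine hs.update (fun x hx a ha => ?_) (fun y hy b hb => ?_)
  · obtain ⟨lv, hlv, hal⟩ := hs.exists_mem_lowerNeighbor_ge hx ha
    exact hal.trans (le_clampOption _ hlv)
  · obtain ⟨hv, hhv, hvb⟩ := hs.exists_mem_upperNeighbor_le hy hb
    refine le_trans (clampOption_le hhv fun lv hlv => ?_) hvb
    exact hs.le_of_mem_lowerNeighbor_of_mem_upperNeighbor hlv hhv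

theorem greedyState_partialMonotone {m : ℕ} (f : Fin m → ℝ) (π : Equiv.Perm (Fin m))
    (n : ℕ) :
    PartialMonotone (greedyState f π n) := by
  induction n with
  | zero => intro _ _ _ a ha; simp [greedyState] at ha
  | succ n ih =>
    rw [greedyState]
    split_ifs
    exacts [ih.greedyStep f _, ih]

theorem greedyState_isSome_of_lt {m : ℕ} (f : Fin m → ℝ) (π : Equiv.Perm (Fin m))
    {n : ℕ} {i : Fin m} (hi : (i : ℕ) < n) : (greedyState f π n (π i)).isSome := by
  induction n with
  | zero => omega
  | succ n ih =>
    rw [greedyState]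
    split_ifs with hn
    · rw [greedyStep_eq_update, Function.update_apply]
      split_ifs with hip
      · rfl
      · refine ih (lt_of_le_of_ne (Nat.lt_succ_iff.mp hi) fun h => hip ?_)
        exact congrArg π (Fin.ext h)
    · exact ih (by omega)

theorem greedyState_isSome {m : ℕ} (f : Fin m → ℝ) (π : Equiv.Perm (Fin m)) (x : Fin m) :
    (greedyState f π m x).isSome :=
  π.apply_symm_apply x ▸ greedyState_isSome_of_lt f π (π.symm x).isLt

theorem stmt0_general {m : ℕ} (f : Fin m → ℝ)
    (π : Equiv.Perm (Fin m)) : Monotone (greedyMono f π) := by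
  intro x y hxy
  obtain ⟨a, ha⟩ := Option.isSome_iff_exists.mp (greedyState_isSome f π x)
  obtain ⟨b, hb⟩ := Option.isSome_iff_exists.mp (greedyState_isSome f π y)
  simpa [greedyMono, ha, hb] using (greedyState_partialMonotone f π m).le_of_le hxy ha hb

/-- the greedy monotonization of any `f : Fin m → [0,1]` along any
permutation `π` is monotone. -/
theorem stmt0 {m : ℕ} (f : Fin m → ℝ) (hf : ∀ x, f x ∈ Set.Icc (0:ℝ) 1)
    (π : Equiv.Perm (Fin m)) : Monotone (greedyMono f π) :=
  stmt0_general f π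
end

section
/- Let f : Fin m → {0,1} and let π be a uniformly random permutation of Fin m. Let M^π be the greedy monotonization of f along π. Then the expectation over the uniform random point x and the random permutation π satisfies E_{π, x}[M^π(x)] = E_x[f(x)], where x is uniform on Fin m. -/
/-!
For `0/1`-valued `f` every state of the greedy procedure is described by a window `[a, b)` of
undecided points: decided points below `a` carry `0`, decided points from `b` on carry `1`, and
the points just outside the window are decided. A point `p` processed inside the window keeps
its value `f p` and cuts the window at `p`; a point processed outside copies the value of its
neighbours. Hence `∑ x, M^π x = m - b`, where `b` is the final threshold.

Split off the first point of `π`; it is uniform and the rest of `π` is a uniform order of the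
remaining points. A point outside the window leaves it unchanged, and the potential
`a + #{zeros of f in [a, b)}` keeps its average when the window is cut at a uniform point of it.
So the final threshold averages to the number of zeros of `f`, i.e. `E ∑ M^π = ∑ f`.
-/

open Finset

/-- The window `[w.1, w.2)` of undecided points after processing `p`; `Z` is the set of zeros. -/
def windowStep (Z : Finset ℕ) (w : ℕ × ℕ) (p : ℕ) : ℕ × ℕ :=
  if w.1 ≤ p ∧ p < w.2 then (if p ∈ Z then (p + 1, w.2) else (w.1, p)) else w

def windowPotential (Z : Finset ℕ) (w : ℕ × ℕ) : ℕ :=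
  w.1 + #{x ∈ Ico w.1 w.2 | x ∈ Z}

section WindowProcess

variable (Z : Finset ℕ)

lemma windowPotential_succ_right {a b : ℕ} (hab : a ≤ b) :
    windowPotential Z (a, b + 1) = windowPotential Z (a, b) + if b ∈ Z then 1 else 0 := by
  simp only [windowPotential, Nat.Ico_succ_right_eq_insert_Ico hab, filter_insert]
  split_ifs with hb
  · rw [card_insert_of_notMem (by simp)]; ring
  · rfl

lemma sum_Ico_windowPotential_windowStep (a b : ℕ) :
    ∑ p ∈ Ico a b, windowPotential Z (windowStep Z (a, b) p)
      = #(Ico a b) * windowPotential Z (a, b) := by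
  rcases lt_or_ge b a with hba | hab
  · simp [Ico_eq_empty_of_le hba.le]
  have hstep : ∀ b, ∀ p ∈ Ico a b,
      windowStep Z (a, b) p = if p ∈ Z then (p + 1, b) else (a, p) :=
    fun _ _ hp => if_pos (mem_Ico.mp hp)
  rw [sum_congr rfl fun p hp => congrArg (windowPotential Z) (hstep b p hp), Nat.card_Ico]
  induction b, hab using Nat.le_induction with
  | base => simp
  | succ b hab ih =>
    have hshift : ∀ p ∈ Ico a b, windowPotential Z (if p ∈ Z then (p + 1, b + 1) else (a, p))
        = windowPotential Z (if p ∈ Z then (p + 1, b) else (a, p))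
          + if p ∈ Z then (if b ∈ Z then 1 else 0) else 0 := by
      intro p hp
      split_ifs <;> simp_all [windowPotential_succ_right]
    rw [sum_Ico_succ_top hab, sum_congr rfl hshift, sum_add_distrib, ih, ← sum_filter, sum_const,
      windowPotential_succ_right Z hab]
    obtain ⟨k, rfl⟩ := Nat.exists_eq_add_of_le hab
    rw [show a + k + 1 - a = k + 1 by omega, Nat.add_sub_cancel_left]
    by_cases hb : a + k ∈ Z
    · simp only [hb, if_true, windowPotential, Ico_self, filter_empty, card_empty]
      ring
    · simp only [hb, if_false]
      ring

lemma windowStep_of_notMem {w : ℕ × ℕ} {p : ℕ} (hp : p ∉ Ico w.1 w.2) :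
    windowStep Z w p = w :=
  if_neg fun h => hp (mem_Ico.mpr h)

lemma mem_Ico_windowStep {w : ℕ × ℕ} {p x : ℕ}
    (hx : x ∈ Ico (windowStep Z w p).1 (windowStep Z w p).2) : x ∈ Ico w.1 w.2 ∧ x ≠ p := by
  unfold windowStep at hx
  split_ifs at hx with hp hpZ <;> simp only [mem_Ico] at hx hp ⊢ <;> omega

lemma sum_windowPotential_windowStep {w : ℕ × ℕ} {S : Finset ℕ} (hS : Ico w.1 w.2 ⊆ S) :
    ∑ p ∈ S, windowPotential Z (windowStep Z w p) = #S * windowPotential Z w := by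
  rw [← sum_sdiff hS, sum_Ico_windowPotential_windowStep,
    sum_congr rfl fun p hp => by rw [windowStep_of_notMem Z (mem_sdiff.mp hp).2], sum_const,
    smul_eq_mul, ← add_mul, card_sdiff_add_card_eq_card hS]

lemma List.ofFn_comp_decomposeFin_symm {α : Type*} {n : ℕ} (φ : Fin (n + 1) → α)
    (y : Fin (n + 1)) (e : Equiv.Perm (Fin n)) :
    List.ofFn (φ ∘ Equiv.Perm.decomposeFin.symm (y, e))
      = φ y :: List.ofFn ((φ ∘ Equiv.swap 0 y ∘ Fin.succ) ∘ e) := by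
  simp only [List.ofFn_succ, Function.comp_apply, Equiv.Perm.decomposeFin_symm_apply_zero,
    Equiv.Perm.decomposeFin_symm_apply_succ]
  rfl

lemma Fin.exists_swap_zero_succ_eq {n : ℕ} {y i : Fin (n + 1)} (hi : i ≠ y) :
    ∃ j : Fin n, Equiv.swap 0 y j.succ = i := by
  obtain ⟨j, hj⟩ :=
    Fin.exists_succ_eq.mpr (by rwa [Ne, Equiv.swap_apply_eq_iff, Equiv.swap_apply_left])
  exact ⟨j, by rw [hj, Equiv.swap_apply_self]⟩

theorem sum_perm_windowPotential_foldl_windowStep (n : ℕ) {φ : Fin n → ℕ}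
    (hφ : Function.Injective φ) (w : ℕ × ℕ) (hw : Ico w.1 w.2 ⊆ univ.image φ) :
    ∑ e : Equiv.Perm (Fin n), windowPotential Z ((List.ofFn (φ ∘ e)).foldl (windowStep Z) w)
      = n.factorial * windowPotential Z w := by
  induction n generalizing w with
  | zero => simp
  | succ n ih =>
    have hcover : ∀ y, Ico (windowStep Z w (φ y)).1 (windowStep Z w (φ y)).2
        ⊆ univ.image (φ ∘ Equiv.swap 0 y ∘ Fin.succ) := by
      intro y x hx
      obtain ⟨hxw, hxy⟩ := mem_Ico_windowStep Z hx
      obtain ⟨i, -, rfl⟩ := mem_image.mp (hw hxw)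
      obtain ⟨j, hj⟩ := Fin.exists_swap_zero_succ_eq (fun h : i = y => hxy (congrArg φ h))
      exact mem_image.mpr ⟨j, mem_univ j, by simp [hj]⟩
    rw [← Equiv.sum_comp Equiv.Perm.decomposeFin.symm, Fintype.sum_prod_type]
    simp_rw [List.ofFn_comp_decomposeFin_symm, List.foldl_cons]
    rw [sum_congr rfl fun y _ =>
        ih (hφ.comp ((Equiv.injective _).comp (Fin.succ_injective n))) _ (hcover y),
      ← mul_sum, ← sum_image (f := fun p => windowPotential Z (windowStep Z w p))
        fun y _ y' _ h => hφ h, sum_windowPotential_windowStep Z hw,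
      card_image_of_injective _ hφ, card_univ, Fintype.card_fin, Nat.factorial_succ]
    ring

end WindowProcess

section GreedyStep

variable {m : ℕ} (f : Fin m → ℝ) (s : Fin m → Option ℝ) (p : Fin m)

noncomputable def lowerNeighbourValue : Option ℝ :=
  if h : (univ.filter fun y => y < p ∧ (s y).isSome).Nonempty then
    s ((univ.filter fun y => y < p ∧ (s y).isSome).max' h) else none

noncomputable def upperNeighbourValue : Option ℝ :=
  if h : (univ.filter fun y => p < y ∧ (s y).isSome).Nonempty then
    s ((univ.filter fun y => p < y ∧ (s y).isSome).min' h) else none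

lemma greedyStep_apply_of_ne {x : Fin m} (hx : x ≠ p) : greedyStep f s p x = s x :=
  if_neg hx

lemma greedyStep_apply_self :
    greedyStep f s p p = some ((lowerNeighbourValue s p).elim
      ((upperNeighbourValue s p).elim (f p) (min (f p)))
      (max ((upperNeighbourValue s p).elim (f p) (min (f p))))) := by
  simp only [greedyStep, lowerNeighbourValue, upperNeighbourValue, if_true]
  split <;> split <;> simp only [*, Option.elim]

lemma greedyStep_eq_update_s2 :
    greedyStep f s p = Function.update s p (greedyStep f s p p) := by
  ext1 x
  rcases eq_or_ne x p with rfl | hx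
  · rw [Function.update_self]
  · rw [Function.update_of_ne hx, greedyStep_apply_of_ne f s p hx]

variable {s p}

lemma exists_of_lowerNeighbourValue_eq_some {v : ℝ} (h : lowerNeighbourValue s p = some v) :
    ∃ q < p, s q = some v := by
  unfold lowerNeighbourValue at h
  split_ifs at h with hne
  exact ⟨_, (mem_filter.mp (max'_mem _ hne)).2.1, h⟩

lemma exists_of_upperNeighbourValue_eq_some {v : ℝ} (h : upperNeighbourValue s p = some v) :
    ∃ q, p < q ∧ s q = some v := by
  unfold upperNeighbourValue at h
  split_ifs at h with hne
  exact ⟨_, (mem_filter.mp (min'_mem _ hne)).2.1, h⟩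

lemma exists_lowerNeighbourValue_eq {q : Fin m} (hq : q < p) (hsq : (s q).isSome) :
    ∃ r, q ≤ r ∧ (s r).isSome ∧ lowerNeighbourValue s p = s r := by
  have hne : (univ.filter fun y => y < p ∧ (s y).isSome).Nonempty := ⟨q, by simp [hq, hsq]⟩
  refine ⟨_, le_max' _ q (by simp [hq, hsq]), (mem_filter.mp (max'_mem _ hne)).2.2, ?_⟩
  rw [lowerNeighbourValue, dif_pos hne]

lemma exists_upperNeighbourValue_eq {q : Fin m} (hq : p < q) (hsq : (s q).isSome) :
    ∃ r, r ≤ q ∧ (s r).isSome ∧ upperNeighbourValue s p = s r := by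
  have hne : (univ.filter fun y => p < y ∧ (s y).isSome).Nonempty := ⟨q, by simp [hq, hsq]⟩
  refine ⟨_, min'_le _ q (by simp [hq, hsq]), (mem_filter.mp (min'_mem _ hne)).2.2, ?_⟩
  rw [upperNeighbourValue, dif_pos hne]

end GreedyStep

noncomputable def zeroSet {m : ℕ} (f : Fin m → ℝ) : Finset ℕ :=
  (univ.filter fun x => f x = 0).map Fin.valEmbedding

lemma coe_mem_zeroSet {m : ℕ} {f : Fin m → ℝ} {x : Fin m} :
    (x : ℕ) ∈ zeroSet f ↔ f x = 0 := by
  simp [zeroSet, Fin.val_inj]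

lemma windowPotential_zeroSet {m : ℕ} {f : Fin m → ℝ} :
    windowPotential (zeroSet f) (0, m) = #(zeroSet f) := by
  rw [windowPotential, filter_mem_eq_inter, inter_eq_right.mpr, zero_add]
  intro x hx
  obtain ⟨y, -, rfl⟩ := mem_map.mp hx
  simp

lemma sum_add_card_zeroSet {m : ℕ} {f : Fin m → ℝ} (hf : ∀ x, f x = 0 ∨ f x = 1) :
    ∑ x, f x + #(zeroSet f) = m := by
  rw [zeroSet, card_map, natCast_card_filter, ← sum_add_distrib]
  simp [sum_congr rfl fun x _ => show f x + (if f x = 0 then 1 else 0) = 1 by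
    rcases hf x with h | h <;> simp [h]]

/-- `s` is the greedy state of a `0/1`-valued function whose undecided window is `[w.1, w.2)`.
The decided neighbours of the window (`below`, `above`) are what force the value of a point
processed outside the window. -/
structure IsWindowState {m : ℕ} (s : Fin m → Option ℝ) (w : ℕ × ℕ) : Prop where
  le : w.1 ≤ w.2
  le_card : w.2 ≤ m
  eq_some : ∀ x v, s x = some v → ((x : ℕ) < w.1 ∧ v = 0) ∨ (w.2 ≤ x ∧ v = 1)
  below : ∀ x : Fin m, (x : ℕ) + 1 = w.1 → s x = some 0
  above : ∀ x : Fin m, (x : ℕ) = w.2 → s x = some 1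

namespace IsWindowState

variable {m : ℕ} {s : Fin m → Option ℝ} {w : ℕ × ℕ} {p : Fin m}

lemma lowerNeighbourValue_of_lt (h : IsWindowState s w) (hp : (p : ℕ) < w.2) :
    lowerNeighbourValue s p = none ∨ lowerNeighbourValue s p = some 0 := by
  rcases hL : lowerNeighbourValue s p with _ | v
  · exact Or.inl rfl
  obtain ⟨q, hqp, hq⟩ := exists_of_lowerNeighbourValue_eq_some hL
  have := Fin.lt_def.mp hqp
  rcases h.eq_some q v hq with ⟨-, rfl⟩ | ⟨hq', -⟩
  · exact Or.inr rfl
  · omega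

lemma upperNeighbourValue_of_le (h : IsWindowState s w) (hp : w.1 ≤ p) :
    upperNeighbourValue s p = none ∨ upperNeighbourValue s p = some 1 := by
  rcases hH : upperNeighbourValue s p with _ | v
  · exact Or.inl rfl
  obtain ⟨q, hpq, hq⟩ := exists_of_upperNeighbourValue_eq_some hH
  have := Fin.lt_def.mp hpq
  rcases h.eq_some q v hq with ⟨hq', -⟩ | ⟨-, rfl⟩
  · omega
  · exact Or.inr rfl

lemma upperNeighbourValue_of_lt (h : IsWindowState s w) (hp : (p : ℕ) < w.1)
    (hsp : s p = none) : upperNeighbourValue s p = some 0 := by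
  have := h.le; have := h.le_card
  set q : Fin m := ⟨w.1 - 1, by omega⟩
  have hsq : s q = some 0 := h.below q (by simp only [q]; omega)
  have hpq : p < q := Fin.lt_def.mpr <| lt_of_le_of_ne (by simp only [q]; omega)
    fun hpq => by rw [Fin.ext hpq, hsq] at hsp; cases hsp
  obtain ⟨r, hrq, hr, hH⟩ := exists_upperNeighbourValue_eq (s := s) hpq (by rw [hsq]; rfl)
  obtain ⟨v, hv⟩ := Option.isSome_iff_exists.mp hr
  have := Fin.le_def.mp hrq
  rcases h.eq_some r v hv with ⟨-, rfl⟩ | ⟨hr', -⟩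
  · rw [hH, hv]
  · simp only [q] at this; omega

lemma lowerNeighbourValue_of_le (h : IsWindowState s w) (hp : w.2 ≤ p)
    (hsp : s p = none) : lowerNeighbourValue s p = some 1 := by
  have := h.le
  set q : Fin m := ⟨w.2, by omega⟩
  have hsq : s q = some 1 := h.above q rfl
  have hqp : q < p := Fin.lt_def.mpr <| lt_of_le_of_ne hp
    fun hqp => by rw [← Fin.ext hqp, hsq] at hsp; cases hsp
  obtain ⟨r, hqr, hr, hL⟩ := exists_lowerNeighbourValue_eq (s := s) hqp (by rw [hsq]; rfl)
  obtain ⟨v, hv⟩ := Option.isSome_iff_exists.mp hr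
  have := Fin.le_def.mp hqr
  rcases h.eq_some r v hv with ⟨hr', -⟩ | ⟨-, rfl⟩
  · simp only [q] at this; omega
  · rw [hL, hv]

lemma greedyStep_apply_self (h : IsWindowState s w) (f : Fin m → ℝ) (hsp : s p = none)
    (hfp : f p = 0 ∨ f p = 1) :
    greedyStep f s p p = some (if (p : ℕ) < w.1 then 0 else if w.2 ≤ p then 1 else f p) := by
  have h0 : 0 ≤ f p := by rcases hfp with hp | hp <;> simp [hp]
  have h1 : f p ≤ 1 := by rcases hfp with hp | hp <;> simp [hp]
  have := h.le
  rw [_root_.greedyStep_apply_self]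
  split_ifs with hlo hhi
  · rcases h.lowerNeighbourValue_of_lt (p := p) (by omega) with hL | hL <;>
      simp [hL, h.upperNeighbourValue_of_lt hlo hsp, h0]
  · rcases h.upperNeighbourValue_of_le (p := p) (by omega) with hH | hH <;>
      simp [hH, h.lowerNeighbourValue_of_le hhi hsp, h1]
  · rcases h.lowerNeighbourValue_of_lt (p := p) (by omega) with hL | hL <;>
      rcases h.upperNeighbourValue_of_le (p := p) (by omega) with hH | hH <;>
      simp [hL, hH, h0, h1]

lemma update (h : IsWindowState s w) (hsp : s p = none) {v : ℝ} {w' : ℕ × ℕ}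
    (hle : w'.1 ≤ w'.2) (hlo : w.1 ≤ w'.1) (hhi : w'.2 ≤ w.2)
    (hv : ((p : ℕ) < w'.1 ∧ v = 0) ∨ (w'.2 ≤ p ∧ v = 1))
    (hbelow : w'.1 = w.1 ∨ w'.1 = p + 1) (habove : w'.2 = w.2 ∨ w'.2 = p) :
    IsWindowState (Function.update s p (some v)) w' where
  le := hle
  le_card := hhi.trans h.le_card
  eq_some x u hx := by
    rcases eq_or_ne x p with rfl | hxp
    · rw [Function.update_self, Option.some_inj] at hx
      subst hx
      exact hv
    · rw [Function.update_of_ne hxp] at hx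
      rcases h.eq_some x u hx with ⟨hx', rfl⟩ | ⟨hx', rfl⟩
      · exact Or.inl ⟨by omega, rfl⟩
      · exact Or.inr ⟨by omega, rfl⟩
  below x hx := by
    rcases eq_or_ne x p with rfl | hxp
    · rw [Function.update_self]
      rcases hv with ⟨-, rfl⟩ | ⟨hp, -⟩
      · rfl
      · omega
    · rw [Function.update_of_ne hxp]
      refine h.below x ?_
      rcases hbelow with hb | hb
      · omega
      · exact absurd (Fin.ext (by omega)) hxp
  above x hx := by
    rcases eq_or_ne x p with rfl | hxp
    · rw [Function.update_self]
      rcases hv with ⟨hp, -⟩ | ⟨-, rfl⟩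
      · omega
      · rfl
    · rw [Function.update_of_ne hxp]
      refine h.above x ?_
      rcases habove with hb | hb
      · omega
      · exact absurd (Fin.ext (by omega)) hxp

lemma greedyStep (h : IsWindowState s w) {f : Fin m → ℝ} (hsp : s p = none)
    (hfp : f p = 0 ∨ f p = 1) :
    IsWindowState (greedyStep f s p) (windowStep (zeroSet f) w p) := by
  have := h.le
  rw [greedyStep_eq_update_s2, h.greedyStep_apply_self f hsp hfp, windowStep]
  by_cases hin : w.1 ≤ p ∧ (p : ℕ) < w.2
  · rw [if_pos hin, if_neg (by omega), if_neg (by omega)]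
    rcases hfp with h0 | h1
    · rw [if_pos (coe_mem_zeroSet.mpr h0), h0]
      exact h.update hsp (by omega) (by omega) le_rfl (Or.inl ⟨by simp, rfl⟩) (Or.inr rfl)
        (Or.inl rfl)
    · rw [if_neg (by rw [coe_mem_zeroSet, h1]; norm_num), h1]
      exact h.update hsp (by omega) le_rfl (by omega) (Or.inr ⟨le_rfl, rfl⟩) (Or.inl rfl)
        (Or.inr rfl)
  · rw [if_neg hin]
    by_cases hlo : (p : ℕ) < w.1
    · rw [if_pos hlo]
      exact h.update hsp h.le le_rfl le_rfl (Or.inl ⟨hlo, rfl⟩) (Or.inl rfl) (Or.inl rfl)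
    · rw [if_neg hlo, if_pos (by omega)]
      exact h.update hsp h.le le_rfl le_rfl (Or.inr ⟨by omega, rfl⟩) (Or.inl rfl) (Or.inl rfl)

lemma fst_eq_snd (h : IsWindowState s w) (hs : ∀ x, (s x).isSome) : w.1 = w.2 := by
  by_contra hne
  have := h.le; have := h.le_card
  obtain ⟨v, hv⟩ := Option.isSome_iff_exists.mp (hs ⟨w.1, by omega⟩)
  rcases h.eq_some _ v hv with ⟨hx, -⟩ | ⟨hx, -⟩ <;> simp only at hx <;> omega

lemma getD_eq (h : IsWindowState s w) (hs : ∀ x, (s x).isSome) (x : Fin m) :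
    (s x).getD 0 = if (x : ℕ) < w.2 then 0 else 1 := by
  have := h.le
  obtain ⟨v, hv⟩ := Option.isSome_iff_exists.mp (hs x)
  rw [hv, Option.getD_some]
  rcases h.eq_some x v hv with ⟨hx, rfl⟩ | ⟨hx, rfl⟩
  · rw [if_pos (by omega)]
  · rw [if_neg (by omega)]

end IsWindowState

lemma Fin.sum_ite_val_lt_eq_sub {m b : ℕ} (hb : b ≤ m) :
    ∑ x : Fin m, (if (x : ℕ) < b then (0 : ℝ) else 1) = m - b := by
  rw [Fin.sum_univ_eq_sum_range (fun i => if i < b then (0 : ℝ) else 1),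
    ← Nat.Ico_zero_eq_range, ← sum_Ico_consecutive _ (Nat.zero_le b) hb,
    sum_congr rfl fun i hi => if_pos (mem_Ico.mp hi).2,
    sum_congr rfl fun i hi => if_neg (not_lt.mpr (mem_Ico.mp hi).1)]
  simp [Nat.cast_sub hb]

section GreedyState

variable {m : ℕ} (f : Fin m → ℝ) (π : Equiv.Perm (Fin m))

lemma greedyState_succ {t : ℕ} (ht : t < m) :
    greedyState f π (t + 1) = greedyStep f (greedyState f π t) (π ⟨t, ht⟩) := by
  rw [greedyState, dif_pos ht]

lemma isSome_greedyState_iff {t : ℕ} (ht : t ≤ m) (x : Fin m) :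
    (greedyState f π t x).isSome ↔ (π.symm x : ℕ) < t := by
  induction t with
  | zero => simp [greedyState]
  | succ t ih =>
    rw [greedyState_succ f π ht, greedyStep_eq_update_s2, Function.update_apply]
    split_ifs with hx
    · simp [hx, greedyStep_apply_self]
    · rw [ih (by omega)]
      have : (π.symm x : ℕ) ≠ t := fun h => hx (by
        rw [← π.apply_symm_apply x]; exact congrArg π (Fin.ext h))
      omega

variable {f}

lemma isWindowState_greedyState (hf : ∀ x, f x = 0 ∨ f x = 1) {t : ℕ} (ht : t ≤ m) :
    IsWindowState (greedyState f π t)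
      ((((List.ofFn π).take t).map Fin.val).foldl (windowStep (zeroSet f)) (0, m)) := by
  induction t with
  | zero =>
    exact ⟨Nat.zero_le m, le_rfl, by simp [greedyState], by simp,
      fun x hx => absurd hx x.isLt.ne⟩
  | succ t ih =>
    have hsp : greedyState f π t (π ⟨t, ht⟩) = none := by
      rw [← Option.not_isSome_iff_eq_none, isSome_greedyState_iff f π (by omega)]
      simp
    rw [greedyState_succ f π ht, List.take_add_one, List.getElem?_ofFn, dif_pos (by omega)]
    simpa using (ih (by omega)).greedyStep hsp (hf _)

lemma sum_greedyMono_add_windowPotential (hf : ∀ x, f x = 0 ∨ f x = 1) :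
    ∑ x, greedyMono f π x
      + windowPotential (zeroSet f)
          ((List.ofFn (Fin.val ∘ π)).foldl (windowStep (zeroSet f)) (0, m))
      = m := by
  have h := isWindowState_greedyState π hf le_rfl
  rw [List.take_of_length_le (by simp), List.map_ofFn] at h
  have hs : ∀ x, (greedyState f π m x).isSome :=
    fun x => (isSome_greedyState_iff f π le_rfl x).mpr (π.symm x).isLt
  have hw := h.fst_eq_snd hs
  simp only [greedyMono, h.getD_eq hs, Fin.sum_ite_val_lt_eq_sub h.le_card, windowPotential, hw,
    Ico_self, filter_empty, card_empty, add_zero]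
  ring

end GreedyState


theorem stmt2_general {m : ℕ} (f : Fin m → ℝ) (hf : ∀ x, f x = 0 ∨ f x = 1) :
    (∑ π : Equiv.Perm (Fin m), ∑ x : Fin m, greedyMono f π x) /
        ((Fintype.card (Equiv.Perm (Fin m)) : ℝ) * m) =
      (∑ x : Fin m, f x) / m := by
  have hpotential := sum_perm_windowPotential_foldl_windowStep (zeroSet f) m Fin.val_injective
    (0, m) fun x hx => mem_image.mpr ⟨⟨x, (mem_Ico.mp hx).2⟩, mem_univ _, rfl⟩
  have hsum : ∑ π : Equiv.Perm (Fin m), ∑ x, greedyMono f π x = m.factorial * ∑ x, f x :=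
    calc
      _ = ∑ π : Equiv.Perm (Fin m), ((m : ℝ) - windowPotential (zeroSet f)
            ((List.ofFn (Fin.val ∘ π)).foldl (windowStep (zeroSet f)) (0, m))) :=
        sum_congr rfl fun π _ => eq_sub_of_add_eq (sum_greedyMono_add_windowPotential π hf)
      _ = m.factorial * ((m : ℝ) - #(zeroSet f)) := by
        rw [sum_sub_distrib, sum_const, ← Nat.cast_sum, hpotential, windowPotential_zeroSet,
          card_univ, Fintype.card_perm, Fintype.card_fin, nsmul_eq_mul]
        push_cast
        ring
      _ = m.factorial * ∑ x, f x := by rw [← sum_add_card_zeroSet hf, add_sub_cancel_right]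
  rw [hsum, Fintype.card_perm, Fintype.card_fin,
    mul_div_mul_left _ _ (Nat.cast_ne_zero.mpr (Nat.factorial_ne_zero m))]

/-- for boolean-valued `f`, the greedy monotonization along a
uniformly random permutation preserves the expectation of `f` under the uniform
distribution on `Fin m`: `E_{π,x}[M^π_f(x)] = E_x[f(x)]`. -/
theorem stmt2 {m : ℕ} (hm : 0 < m) (f : Fin m → ℝ) (hf : ∀ x, f x = 0 ∨ f x = 1) :
    (∑ π : Equiv.Perm (Fin m), ∑ x : Fin m, greedyMono f π x) /
        ((Fintype.card (Equiv.Perm (Fin m)) : ℝ) * m) =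
      (∑ x : Fin m, f x) / m :=
  stmt2_general f hf
end

section
/- Let f : Fin m → {0,1} and fix an interval {l,...,r} ⊆ Fin m. Define V(l,r) = Σ_{x=l}^{r} f(x) − Σ_{x=l}^{r} E[M(x)], where M is produced by the recursive randomized procedure: choose y uniformly from {l,...,r}; if f(y)=0 set M=0 on {l,...,y} and recurse on {y+1,...,r}; if f(y)=1 set M=1 on {y,...,r} and recurse on {l,...,y-1}. Then V(l,r) = 0 for every interval. -/
open Finset
open scoped Classical

/-- Expected total value assigned by the recursive randomized monotonization
procedure on the interval `{l, …, r}` (with enough `fuel`): a pivot `y` is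
chosen uniformly from `{l, …, r}`; if `f y = 0` the procedure assigns `0` on
`{l, …, y}` and recurses on `{y+1, …, r}`; if `f y = 1` it assigns `1` on
`{y, …, r}` (total value `r - y + 1`) and recurses on `{l, …, y-1}`. -/
noncomputable def expSumAux (f : ℕ → ℝ) : ℕ → ℕ → ℕ → ℝ
  | 0, _, _ => 0
  | fuel + 1, l, r =>
    if l ≤ r then
      (∑ y ∈ Finset.Icc l r,
          (if f y = 0 then expSumAux f fuel (y + 1) r
           else ((r : ℝ) - y + 1) + (if l + 1 ≤ y then expSumAux f fuel l (y - 1) else 0)))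
        / ((r : ℝ) + 1 - l)
    else 0

/-- Expected value of `∑_{x=l}^{r} M(x)` for the recursive randomized
monotonization procedure. -/
noncomputable def expSum (f : ℕ → ℝ) (l r : ℕ) : ℝ := expSumAux f (r + 1 - l) l r

/-!
By induction, the recursive calls return the exact sums of `f`. Conditioned on the pivot `y`,
the total then exceeds `∑ f` by `#{x ≥ y | f x = 0}` when `f y = 1`, and falls short of it by
`#{x ≤ y | f x = 1}` when `f y = 0`. Summed over `y`, both count the pairs `a ≤ b` with
`f a = 1` and `f b = 0`, so the average of the totals is `∑ f`.
-/

lemma Finset.sum_Icc_eq_sum_Ico_add_sum_Icc {M : Type*} [AddCommMonoid M] (f : ℕ → M)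
    {l y r : ℕ} (hly : l ≤ y) (hyr : y ≤ r + 1) :
    ∑ x ∈ Icc l r, f x = ∑ x ∈ Ico l y, f x + ∑ x ∈ Icc y r, f x := by
  rw [← Ico_add_one_right_eq_Icc, ← Ico_add_one_right_eq_Icc, sum_Ico_consecutive f hly hyr]

lemma Finset.sum_mul_sum_Icc_swap {R : Type*} [CommSemiring R] (g h : ℕ → R) (l r : ℕ) :
    ∑ y ∈ Icc l r, g y * ∑ x ∈ Icc y r, h x =
      ∑ x ∈ Icc l r, h x * ∑ y ∈ Icc l x, g y := by
  simp_rw [mul_sum, mul_comm (h _)]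
  exact sum_comm' fun y x => by simp only [mem_Icc]; omega

section Pivot

variable (f : ℕ → ℝ)

/-- The total assigned on `{l, …, r}` with pivot `y` when the recursive call is exact;
`Ico l y` stands for the guarded call on `{l, …, y - 1}` (`y - 1` truncates at `y = 0`). -/
noncomputable def pivotTotal (l r y : ℕ) : ℝ :=
  if f y = 0 then ∑ x ∈ Icc (y + 1) r, f x else ((r : ℝ) - y + 1) + ∑ x ∈ Ico l y, f x

lemma pivotTotal_eq {l r y : ℕ} (hly : l ≤ y) (hyr : y ≤ r) (hfy : f y = 0 ∨ f y = 1) :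
    pivotTotal f l r y = ∑ x ∈ Icc l r, f x
      + f y * ∑ x ∈ Icc y r, (1 - f x) - (1 - f y) * ∑ x ∈ Icc l y, f x := by
  rcases hfy with h0 | h1
  · rw [pivotTotal, if_pos h0, h0,
      sum_Icc_eq_sum_Ico_add_sum_Icc f (l := l) (y := y + 1) (r := r) (by omega) (by omega),
      Ico_add_one_right_eq_Icc]
    ring
  · have hcard : ∑ x ∈ Icc y r, (1 : ℝ) = (r : ℝ) - y + 1 := by
      rw [sum_const, Nat.card_Icc, nsmul_one, Nat.cast_sub (by omega)]
      push_cast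
      ring
    rw [pivotTotal, if_neg (by simp [h1]), h1, sum_sub_distrib, hcard,
      sum_Icc_eq_sum_Ico_add_sum_Icc f hly (by omega : y ≤ r + 1)]
    ring

lemma sum_pivotTotal (hf : ∀ x, f x = 0 ∨ f x = 1) {l r : ℕ} (hlr : l ≤ r) :
    ∑ y ∈ Icc l r, pivotTotal f l r y = ((r : ℝ) + 1 - l) * ∑ x ∈ Icc l r, f x := by
  rw [sum_congr rfl fun y hy => pivotTotal_eq f (mem_Icc.1 hy).1 (mem_Icc.1 hy).2 (hf y),
    sum_sub_distrib, sum_add_distrib, sum_mul_sum_Icc_swap, sum_const, Nat.card_Icc,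
    nsmul_eq_mul, Nat.cast_sub (by omega)]
  push_cast
  ring

theorem expSumAux_eq_sum (hf : ∀ x, f x = 0 ∨ f x = 1) :
    ∀ {fuel l r : ℕ}, r + 1 - l ≤ fuel → expSumAux f fuel l r = ∑ x ∈ Icc l r, f x
  | 0, l, r, h => by simp [expSumAux, Icc_eq_empty_of_lt (by omega : r < l)]
  | fuel + 1, l, r, h => by
    rcases lt_or_ge r l with hrl | hlr
    · simp [expSumAux, Icc_eq_empty_of_lt hrl, not_le.2 hrl]
    have hstep : ∀ y ∈ Icc l r,
        (if f y = 0 then expSumAux f fuel (y + 1) r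
          else ((r : ℝ) - y + 1) + (if l + 1 ≤ y then expSumAux f fuel l (y - 1) else 0))
          = pivotTotal f l r y := by
      intro y hy
      rw [mem_Icc] at hy
      have hlow :
          (if l + 1 ≤ y then expSumAux f fuel l (y - 1) else 0) = ∑ x ∈ Ico l y, f x := by
        split_ifs with hly
        · rw [expSumAux_eq_sum hf (by omega),
            Icc_sub_one_right_eq_Ico_of_not_isMin (by simp; omega)]
        · simp [show y = l by omega]
      rw [hlow, expSumAux_eq_sum hf (by omega), pivotTotal]
    have hlen : (0 : ℝ) < (r : ℝ) + 1 - l := by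
      have : (l : ℝ) ≤ r := by exact_mod_cast hlr
      linarith
    rw [expSumAux, if_pos hlr, sum_congr rfl hstep, sum_pivotTotal f hf hlr,
      mul_div_cancel_left₀ _ hlen.ne']

end Pivot

/-- for boolean-valued `f`,
`V(l,r) = Σ_{x=l}^{r} f(x) − Σ_{x=l}^{r} E[M(x)] = 0` for every interval. -/
theorem stmt3 (f : ℕ → ℝ) (hf : ∀ x, f x = 0 ∨ f x = 1) (l r : ℕ) :
    (∑ x ∈ Finset.Icc l r, f x) - expSum f l r = 0 := by
  rw [expSum, expSumAux_eq_sum f hf le_rfl, sub_self]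
end

section
/- Let f, g : Fin m → [0,1] with f(x) ≤ g(x) for all x, and let π be any permutation of Fin m. Let M^π_f and M^π_g be the greedy monotonizations of f and g along the same permutation π. Then M^π_f(x) ≤ M^π_g(x) for all x ∈ Fin m. -/
open Finset

/-!
The two greedy runs are compared step by step. By induction on the number of processed points,
both states have assigned exactly the same points, and each value assigned for `f` is at most the
one assigned for `g`. Hence at every step the closest assigned neighbours of the current point are
the same points in both runs, their values `L`, `H` are ordered, and `median {f p, L, H}` is
monotone in each of its three arguments.
-/

theorem Option.Rel.isSome_eq {α β : Type*} {r : α → β → Prop} {a : Option α} {b : Option β}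
    (h : Option.Rel r a b) : a.isSome = b.isSome := by
  cases h <;> rfl

theorem Option.Rel.getD_le_getD {α : Type*} [Preorder α] {a b : Option α}
    (h : Option.Rel (· ≤ ·) a b) (c : α) : a.getD c ≤ b.getD c := by
  cases h with
  | some h => exact h
  | none => exact le_rfl

section NearestValue

variable {ι α β : Type*} [Fintype ι] [LinearOrder ι]

noncomputable def nearestValueBelow (s : ι → Option α) (p : ι) : Option α :=
  let B := Finset.univ.filter (fun y => y < p ∧ (s y).isSome)
  if h : B.Nonempty then s (B.max' h) else none

noncomputable def nearestValueAbove (s : ι → Option α) (p : ι) : Option α :=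
  let A := Finset.univ.filter (fun y => p < y ∧ (s y).isSome)
  if h : A.Nonempty then s (A.min' h) else none

theorem nearestValueBelow_rel {r : α → β → Prop} {s : ι → Option α} {t : ι → Option β}
    (hst : ∀ y, Option.Rel r (s y) (t y)) (p : ι) :
    Option.Rel r (nearestValueBelow s p) (nearestValueBelow t p) := by
  simp only [nearestValueBelow, fun y => (hst y).isSome_eq]
  split
  · exact hst _
  · exact .none

theorem nearestValueAbove_rel {r : α → β → Prop} {s : ι → Option α} {t : ι → Option β}
    (hst : ∀ y, Option.Rel r (s y) (t y)) (p : ι) :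
    Option.Rel r (nearestValueAbove s p) (nearestValueAbove t p) := by
  simp only [nearestValueAbove, fun y => (hst y).isSome_eq]
  split
  · exact hst _
  · exact .none

end NearestValue

/- Written on `ℝ` with the very `match`es of `greedyStep`, so that `greedyStep_self` holds
definitionally. -/
def clampBetween (a : ℝ) (L H : Option ℝ) : ℝ :=
  let v := match H with | some h => min a h | none => a
  match L with | some l => max v l | none => v

theorem clampBetween_le_clampBetween {a b : ℝ} {L₁ L₂ H₁ H₂ : Option ℝ} (hab : a ≤ b)
    (hL : Option.Rel (· ≤ ·) L₁ L₂) (hH : Option.Rel (· ≤ ·) H₁ H₂) :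
    clampBetween a L₁ H₁ ≤ clampBetween b L₂ H₂ := by
  cases hL <;> cases hH <;> simp only [clampBetween] <;> gcongr

section GreedyStep

variable {m : ℕ}

theorem greedyStep_self (f : Fin m → ℝ) (s : Fin m → Option ℝ) (p : Fin m) :
    greedyStep f s p p =
      some (clampBetween (f p) (nearestValueBelow s p) (nearestValueAbove s p)) :=
  if_pos rfl

theorem greedyStep_of_ne (f : Fin m → ℝ) (s : Fin m → Option ℝ) {p y : Fin m} (hy : y ≠ p) :
    greedyStep f s p y = s y :=
  if_neg hy

theorem greedyStep_rel {f g : Fin m → ℝ} (hfg : ∀ x, f x ≤ g x) {s t : Fin m → Option ℝ}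
    (hst : ∀ y, Option.Rel (· ≤ ·) (s y) (t y)) (p y : Fin m) :
    Option.Rel (· ≤ ·) (greedyStep f s p y) (greedyStep g t p y) := by
  obtain rfl | hy := eq_or_ne y p
  · rw [greedyStep_self, greedyStep_self, Option.rel_some_some]
    exact clampBetween_le_clampBetween (hfg y) (nearestValueBelow_rel hst y)
      (nearestValueAbove_rel hst y)
  · rw [greedyStep_of_ne f s hy, greedyStep_of_ne g t hy]
    exact hst y

theorem greedyState_rel {f g : Fin m → ℝ} (hfg : ∀ x, f x ≤ g x) (π : Equiv.Perm (Fin m))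
    (n : ℕ) (y : Fin m) : Option.Rel (· ≤ ·) (greedyState f π n y) (greedyState g π n y) := by
  induction n generalizing y with
  | zero => exact .none
  | succ n ih =>
    rw [greedyState, greedyState]
    split
    · exact greedyStep_rel hfg ih _ y
    · exact ih y

end GreedyStep

theorem stmt5_general {m : ℕ} (f g : Fin m → ℝ)
    (hfg : ∀ x, f x ≤ g x) (π : Equiv.Perm (Fin m)) :
    ∀ x, greedyMono f π x ≤ greedyMono g π x :=
  fun x => (greedyState_rel hfg π m x).getD_le_getD 0

/-- the greedy monotonization operator is monotone with respect
to pointwise ordering of input functions, when the same permutation is used. -/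
theorem stmt5 {m : ℕ} (f g : Fin m → ℝ)
    (hf : ∀ x, f x ∈ Set.Icc (0:ℝ) 1) (hg : ∀ x, g x ∈ Set.Icc (0:ℝ) 1)
    (hfg : ∀ x, f x ≤ g x) (π : Equiv.Perm (Fin m)) :
    ∀ x, greedyMono f π x ≤ greedyMono g π x :=
  stmt5_general f g hfg π
end

section
/- For boolean-valued f : Fin m → {0,1}, the greedy monotonization along a fixed permutation π commutes with thresholding: for any f : Fin m → [0,1] and any t ∈ [0,1), the indicator of {M^π_f > t} equals M^π_{[f>t]}, where [f>t](x) = 1 if f(x) > t and 0 otherwise. -/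
/-!
Each value the greedy construction assigns is `f p` clamped by `min` and `max` against values
assigned earlier, and a monotone `g` commutes with `min` and `max`; so running the construction
on `g ∘ f` assigns `g` of what it assigns on `f`. Thresholding at `t` is monotone and, for
`0 ≤ t`, sends the default value `0` to `0`.
-/

open Finset

section MonotoneMap

variable {m : ℕ} {g : ℝ → ℝ}

theorem greedyStep_map_of_monotone (hg : Monotone g) (f : Fin m → ℝ) (s : Fin m → Option ℝ)
    (p : Fin m) :
    greedyStep (g ∘ f) (fun y => (s y).map g) p = fun y => (greedyStep f s p y).map g := by
  have map_dite (c : Prop) [Decidable c] (o : c → Option ℝ) :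
      (if h : c then (o h).map g else none) = (if h : c then o h else none).map g := by
    split_ifs <;> rfl
  funext y
  unfold greedyStep
  simp only [Option.isSome_map, Function.comp_apply]
  by_cases hy : y = p
  · simp only [hy, if_true, Option.map_some]
    rw [map_dite, map_dite]
    generalize (if h : _ then s (Finset.max' _ h) else none) = L
    generalize (if h : _ then s (Finset.min' _ h) else none) = H
    cases L <;> cases H <;> simp [hg.map_min, hg.map_max]
  · simp only [hy, if_false]

theorem greedyState_map_of_monotone (hg : Monotone g) (f : Fin m → ℝ) (π : Equiv.Perm (Fin m))
    (n : ℕ) : greedyState (g ∘ f) π n = fun x => (greedyState f π n x).map g := by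
  induction n with
  | zero => rfl
  | succ n ih =>
    by_cases h : n < m
    · simp only [greedyState, dif_pos h, ih, greedyStep_map_of_monotone hg]
    · simp only [greedyState, dif_neg h, ih]

theorem greedyMono_comp_of_monotone (hg : Monotone g) (hg0 : g 0 = 0) (f : Fin m → ℝ)
    (π : Equiv.Perm (Fin m)) (x : Fin m) : greedyMono (g ∘ f) π x = g (greedyMono f π x) := by
  unfold greedyMono
  rw [greedyState_map_of_monotone hg]
  dsimp only
  cases greedyState f π m x <;> simp [hg0]

end MonotoneMap

theorem monotone_indicator_lt (t : ℝ) : Monotone fun r : ℝ => if t < r then (1 : ℝ) else 0 := by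
  intro a b hab
  dsimp only
  split_ifs <;> linarith

open scoped Classical in
theorem stmt6_general {m : ℕ} (f : Fin m → ℝ)
    (π : Equiv.Perm (Fin m)) (t : ℝ) (ht : t ∈ Set.Ico (0:ℝ) 1) :
    ∀ x, (if t < greedyMono f π x then (1:ℝ) else 0) =
      greedyMono (fun y => if t < f y then (1:ℝ) else 0) π x := fun x =>
  (greedyMono_comp_of_monotone (monotone_indicator_lt t) (if_neg ht.1.not_gt) f π x).symm

open scoped Classical in
/-- the greedy monotonization commutes with thresholding: the
indicator of `{M^π_f > t}` equals `M^π_{[f > t]}`. -/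
theorem stmt6 {m : ℕ} (f : Fin m → ℝ) (hf : ∀ x, f x ∈ Set.Icc (0:ℝ) 1)
    (π : Equiv.Perm (Fin m)) (t : ℝ) (ht : t ∈ Set.Ico (0:ℝ) 1) :
    ∀ x, (if t < greedyMono f π x then (1:ℝ) else 0) =
      greedyMono (fun y => if t < f y then (1:ℝ) else 0) π x :=
  stmt6_general f π t ht
end

section
/- Let D be a probability distribution on ℝ and f : ℝ → [0,1]. Partition the support of D into m = 1/ε intervals I_1, ..., I_m each of D-probability ε, and for each i draw x_i from D conditioned on I_i. Define f̃(x) = 0 for x ∈ I_1 and f̃(x) = f(x_{i-1}) for x ∈ I_i with i > 1. Then E_{x∼D}[f̃(x)] ≥ E_{x∼D}[f(x)] − ε. -/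
open MeasureTheory

/-! Averaged over the sampled points, `f̃` takes on `I (i+1)` the conditional mean of `f` on `I i`,
so `E[f̃] = ∑_{i < m-1} ∫_{I i} f`.  This telescopes against `E[f] = ∑_{i < m} ∫_{I i} f`, leaving
only `∫_{I (m-1)} f ≤ μ (I (m-1)) = ε`. -/

section Partition

variable {α ι : Type*} [MeasurableSpace α] [Fintype ι] {μ : Measure α} {s : ι → Set α}

theorem integral_eq_sum_setIntegral_of_iUnion_eq_univ {E : Type*} [NormedAddCommGroup E]
    [NormedSpace ℝ E] (hs : ∀ i, MeasurableSet (s i)) (hdisj : Pairwise (Function.onFun Disjoint s))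
    (hcover : (⋃ i, s i) = Set.univ) {f : α → E} (hf : ∀ i, IntegrableOn f (s i) μ) :
    ∫ x, f x ∂μ = ∑ i, ∫ x in s i, f x ∂μ := by
  rw [← setIntegral_univ, ← hcover, integral_iUnion_fintype hs hdisj hf]

theorem integral_eq_sum_of_eqOn_const [IsFiniteMeasure μ] (hs : ∀ i, MeasurableSet (s i))
    (hdisj : Pairwise (Function.onFun Disjoint s)) (hcover : (⋃ i, s i) = Set.univ)
    {g : α → ℝ} {c : ι → ℝ} (hg : ∀ i, ∀ x ∈ s i, g x = c i) :
    ∫ x, g x ∂μ = ∑ i, μ.real (s i) * c i := by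
  have hgs : ∀ i, ∫ x in s i, g x ∂μ = μ.real (s i) * c i := fun i => by
    rw [setIntegral_congr_fun (hs i) (hg i), setIntegral_const, smul_eq_mul]
  have hint : ∀ i, IntegrableOn g (s i) μ := fun i =>
    (integrableOn_const (C := c i)).congr_fun (fun x hx => (hg i x hx).symm) (hs i)
  rw [integral_eq_sum_setIntegral_of_iUnion_eq_univ hs hdisj hcover hint]
  exact Finset.sum_congr rfl fun i _ => hgs i

end Partition

theorem setIntegral_le_measureReal_of_mem_Icc {α : Type*} [MeasurableSpace α] {μ : Measure α}
    {s : Set α} (hs : μ s < ⊤) {f : α → ℝ} (hf01 : ∀ x, f x ∈ Set.Icc (0 : ℝ) 1) :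
    ∫ x in s, f x ∂μ ≤ μ.real s := by
  have hnorm : ∀ x ∈ s, ‖f x‖ ≤ 1 := fun x _ => by
    rw [Real.norm_of_nonneg (hf01 x).1]
    exact (hf01 x).2
  simpa using (le_abs_self _).trans (norm_setIntegral_le_of_norm_le_const hs hnorm)

theorem stmt8_general (μ : Measure ℝ) [IsProbabilityMeasure μ] (ε : ℝ) (hε : 0 < ε)
    (m : ℕ) (hm : 0 < m)
    (f : ℝ → ℝ) (hf : Measurable f) (hf01 : ∀ x, f x ∈ Set.Icc (0:ℝ) 1)
    (I : Fin m → Set ℝ) (hImeas : ∀ i, MeasurableSet (I i))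
    (hIdisj : Pairwise (Function.onFun Disjoint I))
    (hIcover : (⋃ i, I i) = Set.univ)
    (hIprob : ∀ i, μ (I i) = ENNReal.ofReal ε)
    (g : ℝ → ℝ)
    (hg0 : ∀ x ∈ I ⟨0, hm⟩, g x = 0)
    (hgi : ∀ i : Fin m, 0 < (i : ℕ) → ∀ x ∈ I i,
      g x = ε⁻¹ * ∫ y in I ⟨(i : ℕ) - 1, lt_of_le_of_lt (Nat.sub_le _ _) i.isLt⟩, f y ∂μ) :
    ∫ x, g x ∂μ ≥ (∫ x, f x ∂μ) - ε := by
  obtain ⟨n, rfl⟩ := Nat.exists_eq_add_one_of_ne_zero hm.ne'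
  have hμI : ∀ i, μ.real (I i) = ε := fun i => by
    rw [measureReal_def, hIprob i, ENNReal.toReal_ofReal hε.le]
  have hfint : Integrable f μ :=
    .of_bound hf.aestronglyMeasurable 1 (.of_forall fun x => by
      simpa [abs_of_nonneg (hf01 x).1] using (hf01 x).2)
  let c : Fin (n + 1) → ℝ := Fin.cases 0 fun j => ε⁻¹ * ∫ y in I j.castSucc, f y ∂μ
  have hgc : ∀ i, ∀ x ∈ I i, g x = c i :=
    Fin.cases hg0 fun j => hgi j.succ j.succ_pos
  calc (∫ x, f x ∂μ) - ε
      = ∑ j : Fin n, ∫ y in I j.castSucc, f y ∂μ + (∫ y in I (Fin.last n), f y ∂μ - ε) := by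
        rw [integral_eq_sum_setIntegral_of_iUnion_eq_univ hImeas hIdisj hIcover
          fun i => hfint.integrableOn, Fin.sum_univ_castSucc, add_sub_assoc]
    _ ≤ ∑ j : Fin n, ∫ y in I j.castSucc, f y ∂μ := by
        have hlast := setIntegral_le_measureReal_of_mem_Icc (measure_lt_top μ (I (Fin.last n))) hf01
        rw [hμI] at hlast
        linarith
    _ = ∫ x, g x ∂μ := by
        rw [integral_eq_sum_of_eqOn_const hImeas hIdisj hIcover hgc, Fin.sum_univ_succ]
        simp [c, hμI, hε.ne']

/-- single-dimensional discretization. The support of the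
probability distribution `μ` is partitioned into `m = 1/ε` ordered intervals
`I 0 < I 1 < ⋯ < I (m-1)`, each of probability `ε`.  The function `g = f̃` is
`0` on the lowest interval and, on each interval `I i` with `i > 0`, equals the
expected value of `f` at a random point drawn from `μ` conditioned on
`I (i-1)` (i.e. `ε⁻¹ ∫_{I (i-1)} f dμ`, the expectation over the sampled point
`x_{i-1} ∼ μ|I_{i-1}`).  Then `E[f̃] ≥ E[f] − ε`. -/
theorem stmt8 (μ : Measure ℝ) [IsProbabilityMeasure μ] (ε : ℝ) (hε : 0 < ε)
    (m : ℕ) (hm : 0 < m) (hmε : (m : ℝ) * ε = 1)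
    (f : ℝ → ℝ) (hf : Measurable f) (hf01 : ∀ x, f x ∈ Set.Icc (0:ℝ) 1)
    (I : Fin m → Set ℝ) (hImeas : ∀ i, MeasurableSet (I i))
    (hIdisj : Pairwise (Function.onFun Disjoint I))
    (hIcover : (⋃ i, I i) = Set.univ)
    (hIord : ∀ i j : Fin m, i < j → ∀ a ∈ I i, ∀ b ∈ I j, a < b)
    (hIprob : ∀ i, μ (I i) = ENNReal.ofReal ε)
    (g : ℝ → ℝ)
    (hg0 : ∀ x ∈ I ⟨0, hm⟩, g x = 0)
    (hgi : ∀ i : Fin m, 0 < (i : ℕ) → ∀ x ∈ I i,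
      g x = ε⁻¹ * ∫ y in I ⟨(i : ℕ) - 1, lt_of_le_of_lt (Nat.sub_le _ _) i.isLt⟩, f y ∂μ) :
    ∫ x, g x ∂μ ≥ (∫ x, f x ∂μ) - ε :=
  stmt8_general μ ε hε m hm f hf hf01 I hImeas hIdisj hIcover hIprob g hg0 hgi
end
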